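/- arXiv:1111.0060 — 2 statements merged into one kernel-verified Lean document; each statement's English description precedes it below -/
import Mathlib

section
/- Let K = (k_0, …, k_N) be a switching policy, let J ∈ {0, …, N−1} be an index such that k_J − k_{J−1} ≥ 2 if J ≥ 1 (and k_0 ≥ 1 if J = 0), and let K' = (k'_0, …, k'_N) be the policy with k'_J = k_J − 1 and k'_i = k_i for all i ≠ J. Then F(K) ≤ F(K'), i.e., decreasing a single switching point by one can only increase the expected number of workers in the front room. -/
open Finset

/-- A switching policy: `k 0 ≥ 0`, `k i - k (i-1) ≥ 1` for `1 ≤ i ≤ N`, and `k N = S`. -/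
def IsPolicy (N : ℕ) (S : ℤ) (k : ℕ → ℤ) : Prop :=
  0 ≤ k 0 ∧ (∀ i : ℕ, 1 ≤ i → i ≤ N → 1 ≤ k i - k (i - 1)) ∧ k N = S

/-- `X_i = ∏_{g=1}^{i-1} (1/g)^(k_g - k_{g-1})`. -/
noncomputable def Xcoef (k : ℕ → ℤ) (i : ℕ) : ℝ :=
  ∏ g ∈ Finset.Icc 1 (i - 1), ((1 : ℝ) / (g : ℝ)) ^ (k g - k (g - 1))

/-- `β (k 0) = 1` and, for `1 ≤ i ≤ N` and `k (i-1) + 1 ≤ j ≤ k i`,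
`β j = (λ/μ)^(j - k 0) * (1/i)^(j - k (i-1)) * X_i`. -/
def IsBeta (lam mu : ℝ) (N : ℕ) (k : ℕ → ℤ) (β : ℤ → ℝ) : Prop :=
  β (k 0) = 1 ∧
  ∀ i : ℕ, 1 ≤ i → i ≤ N → ∀ j : ℤ, k (i - 1) + 1 ≤ j → j ≤ k i →
    β j = (lam / mu) ^ (j - k 0) * ((1 : ℝ) / (i : ℝ)) ^ (j - k (i - 1)) * Xcoef k i

/-- Steady-state probabilities `P j = β j / Σ_{m=k 0}^{S} β m`. -/
noncomputable def Pfun (S : ℤ) (k : ℕ → ℤ) (β : ℤ → ℝ) (j : ℤ) : ℝ :=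
  β j / ∑ m ∈ Finset.Icc (k 0) S, β m

/-- Expected number of front-room workers. -/
noncomputable def Fval (N : ℕ) (S : ℤ) (k : ℕ → ℤ) (β : ℤ → ℝ) : ℝ :=
  ∑ i ∈ Finset.Icc 1 N, ∑ j ∈ Finset.Icc (k (i - 1) + 1) (k i), (i : ℝ) * Pfun S k β j

/-- Expected number of back-room workers. -/
noncomputable def Bval (N : ℕ) (S : ℤ) (k : ℕ → ℤ) (β : ℤ → ℝ) : ℝ :=
  (N : ℝ) - Fval N S k β

/-- Expected number of customers in the front room. -/
noncomputable def Lval (S : ℤ) (k : ℕ → ℤ) (β : ℤ → ℝ) : ℝ :=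
  ∑ j ∈ Finset.Icc (k 0) S, (j : ℝ) * Pfun S k β j

/-- Expected waiting time `W_q = L / (λ (1 - P S)) - 1/μ`. -/
noncomputable def Wq (lam mu : ℝ) (S : ℤ) (k : ℕ → ℤ) (β : ℤ → ℝ) : ℝ :=
  Lval S k β / (lam * (1 - Pfun S k β S)) - 1 / mu

private lemma sum_Ioc_split (f : ℤ → ℝ) {a b c : ℤ} (h1 : a ≤ b) (h2 : b ≤ c) :
    ∑ j ∈ Ioc a c, f j = (∑ j ∈ Ioc a b, f j) + ∑ j ∈ Ioc b c, f j := by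
  rw [← Finset.Ioc_union_Ioc_eq_Ioc h1 h2, Finset.sum_union]
  rw [Finset.disjoint_left]
  intro x hx hx'
  simp only [Finset.mem_Ioc] at hx hx'
  omega

private lemma Icc_eq_Ioc' (a b : ℤ) : Finset.Icc a b = Finset.Ioc (a-1) b := by
  ext x; simp only [Finset.mem_Icc, Finset.mem_Ioc]; omega

private lemma Ioc_singleton (a : ℤ) : Finset.Ioc (a-1) a = {a} := by
  ext x; simp only [Finset.mem_Ioc, Finset.mem_singleton]; omega

private lemma reindex (a b : ℤ) (f : ℤ → ℝ) :
    ∑ j ∈ Finset.Ioc (a-1) (b-1), f j = ∑ j ∈ Finset.Ioc a b, f (j-1) := by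
  have h : Finset.Ioc a b = (Finset.Ioc (a-1) (b-1)).map (addRightEmbedding 1) := by
    rw [Finset.map_add_right_Ioc]; congr 1 <;> ring
  rw [h, Finset.sum_map]
  simp [addRightEmbedding]

private lemma cover (N : ℕ) (k : ℕ → ℤ) {j : ℤ} (h1 : k 0 < j) (h2 : j ≤ k N) :
    ∃ i : ℕ, 1 ≤ i ∧ i ≤ N ∧ k (i-1) < j ∧ j ≤ k i := by
  induction N with
  | zero => omega
  | succ n ih =>
    by_cases h : j ≤ k n
    · obtain ⟨i, hi1, hi2, hi3, hi4⟩ := ih h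
      exact ⟨i, hi1, hi2.trans (Nat.le_succ n), hi3, hi4⟩
    · exact ⟨n+1, by omega, le_refl _, by simpa using not_le.mp h, h2⟩

private lemma mono_gen (k : ℕ → ℤ) (N : ℕ) (hm : ∀ i : ℕ, 1 ≤ i → i ≤ N → k (i-1) ≤ k i) :
    ∀ a b : ℕ, a ≤ b → b ≤ N → k a ≤ k b := by
  intro a b hab hbN
  induction b with
  | zero => have : a = 0 := by omega
            rw [this]
  | succ n ih =>
    rcases Nat.lt_or_ge a (n+1) with h | h
    · exact (ih (by omega) (by omega)).trans (by simpa using hm (n+1) (by omega) hbN)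
    · have : a = n+1 := by omega
      rw [this]

private lemma sum_blocks (N : ℕ) (k : ℕ → ℤ) (hm : ∀ i : ℕ, 1 ≤ i → i ≤ N → k (i-1) ≤ k i) (f : ℤ → ℝ) :
    ∑ i ∈ Finset.Icc 1 N, ∑ j ∈ Finset.Ioc (k (i-1)) (k i), f j = ∑ j ∈ Finset.Ioc (k 0) (k N), f j := by
  induction N with
  | zero => simp
  | succ n ih =>
    rw [Finset.sum_Icc_succ_top (by omega : 1 ≤ n+1)]
    simp only [Nat.add_sub_cancel]
    rw [
        ih (fun i h1 h2 => hm i h1 (h2.trans (Nat.le_succ n)))]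
    have h0n : k 0 ≤ k n := mono_gen k (n+1) hm 0 n (by omega) (by omega)
    have hnn : k n ≤ k (n+1) := by simpa using hm (n+1) (by omega) le_rfl
    rw [← sum_Ioc_split f h0n hnn]

private lemma Xcoef_pos (k : ℕ → ℤ) (i : ℕ) : 0 < Xcoef k i := by
  apply Finset.prod_pos
  intro g hg
  have hg1 : 1 ≤ g := (Finset.mem_Icc.mp hg).1
  have : (0:ℝ) < (g:ℝ) := by exact_mod_cast hg1
  exact zpow_pos (by positivity) _

private lemma Xcoef_succ (k : ℕ → ℤ) (m : ℕ) (hm : 1 ≤ m) :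
    Xcoef k (m+1) = Xcoef k m * ((1:ℝ)/(m:ℝ)) ^ (k m - k (m-1)) := by
  unfold Xcoef
  simp only [Nat.add_sub_cancel]
  have hm1 : m - 1 + 1 = m := by omega
  calc (∏ g ∈ Finset.Icc 1 m, ((1:ℝ)/(g:ℝ)) ^ (k g - k (g-1)))
      = ∏ g ∈ Finset.Icc 1 ((m-1)+1), ((1:ℝ)/(g:ℝ)) ^ (k g - k (g-1)) := by rw [hm1]
    _ = (∏ g ∈ Finset.Icc 1 (m-1), ((1:ℝ)/(g:ℝ)) ^ (k g - k (g-1)))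
          * ((1:ℝ)/((m-1+1:ℕ):ℝ)) ^ (k (m-1+1) - k (m-1+1-1)) := by
        rw [Finset.prod_Icc_succ_top (by omega)]
    _ = _ := by rw [hm1]

private lemma beta_formula {lam mu : ℝ} {N : ℕ} {S : ℤ} {k : ℕ → ℤ} {β : ℤ → ℝ}
    (hk : IsPolicy N S k) (hβ : IsBeta lam mu N k β) :
    ∀ i : ℕ, 1 ≤ i → i ≤ N → ∀ j : ℤ, k (i-1) ≤ j → j ≤ k i →
      β j = (lam/mu) ^ (j - k 0) * ((1:ℝ)/(i:ℝ)) ^ (j - k (i-1)) * Xcoef k i := by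
  intro i
  induction i with
  | zero => omega
  | succ m ih =>
    intro _ hiN j hj1 hj2
    simp only [Nat.add_sub_cancel] at hj1 hj2 ⊢
    rcases lt_or_eq_of_le hj1 with h | h
    · exact hβ.2 (m+1) (by omega) hiN j (by simpa only [Nat.add_sub_cancel] using by omega) hj2
    · rw [← h]
      rcases Nat.eq_zero_or_pos m with hm0 | hm1
      · subst hm0
        have hx : Xcoef k 1 = 1 := by
          unfold Xcoef
          simp
        simp [hβ.1, hx]
      · have hb : β (k m) = (lam/mu) ^ (k m - k 0) * ((1:ℝ)/(m:ℝ)) ^ (k m - k (m-1)) * Xcoef k m :=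
          ih hm1 (by omega) (k m)
            (by have := hk.2.1 m hm1 (by omega); omega) le_rfl
        rw [hb, Xcoef_succ k m hm1, sub_self, zpow_zero]
        ring

private lemma beta_pos {lam mu : ℝ} (hlam : 0 < lam) (hmu : 0 < mu) {N : ℕ} {S : ℤ} {k : ℕ → ℤ}
    {β : ℤ → ℝ} (hk : IsPolicy N S k) (hβ : IsBeta lam mu N k β) :
    ∀ j : ℤ, k 0 ≤ j → j ≤ S → 0 < β j := by
  intro j h1 h2
  rcases lt_or_eq_of_le h1 with h | h
  · obtain ⟨i, hi1, hiN, hlo, hhi⟩ := cover N k h (by rw [hk.2.2]; exact h2)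
    rw [beta_formula hk hβ i hi1 hiN j hlo.le hhi]
    have hi0 : (0:ℝ) < (i:ℝ) := by exact_mod_cast hi1
    have h1 : (0:ℝ) < lam/mu := by positivity
    have h2 : (0:ℝ) < (1:ℝ)/(i:ℝ) := by positivity
    exact mul_pos (mul_pos (zpow_pos h1 _) (zpow_pos h2 _)) (Xcoef_pos k i)
  · rw [← h, hβ.1]; exact one_pos

private lemma beta_rec {lam mu : ℝ} (hlam : 0 < lam) (hmu : 0 < mu) {N : ℕ} {S : ℤ} {k : ℕ → ℤ}
    {β : ℤ → ℝ} (hk : IsPolicy N S k) (hβ : IsBeta lam mu N k β) :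
    ∀ i : ℕ, 1 ≤ i → i ≤ N → ∀ j : ℤ, k (i-1) < j → j ≤ k i →
      (i:ℝ) * β j = (lam/mu) * β (j-1) := by
  intro i hi1 hiN j hj1 hj2
  rw [beta_formula hk hβ i hi1 hiN j hj1.le hj2,
      beta_formula hk hβ i hi1 hiN (j-1) (by omega) (by omega)]
  have hip : (0:ℝ) < (i:ℝ) := by exact_mod_cast hi1
  have hi0 : ((i:ℝ)) ≠ 0 := ne_of_gt hip
  have hr0 : lam/mu ≠ 0 := by positivity
  rw [show j - k 0 = (j-1-k 0)+1 by ring, show j - k (i-1) = (j-1-k (i-1))+1 by ring,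
      zpow_add_one₀ hr0, zpow_add_one₀ (one_div_ne_zero hi0)]
  have hc : (i:ℝ) * ((1:ℝ)/(i:ℝ)) = 1 := by field_simp
  linear_combination ((lam/mu) ^ (j-1-k 0) * (lam/mu) * ((1:ℝ)/(i:ℝ)) ^ (j-1-k (i-1)) * Xcoef k i) * hc

private lemma Fval_eq {lam mu : ℝ} (hlam : 0 < lam) (hmu : 0 < mu) {N : ℕ}
    {S : ℤ} {k : ℕ → ℤ} (hk : IsPolicy N S k) {β : ℤ → ℝ} (hβ : IsBeta lam mu N k β) :
    Fval N S k β
      = (lam/mu) * ((∑ m ∈ Finset.Icc (k 0) S, β m) - β S) / (∑ m ∈ Finset.Icc (k 0) S, β m) := by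
  have hmono : ∀ i : ℕ, 1 ≤ i → i ≤ N → k (i-1) ≤ k i := fun i h1 h2 => by
    have := hk.2.1 i h1 h2; omega
  have hk0S : k 0 ≤ S := by
    have h := mono_gen k N hmono 0 N (Nat.zero_le N) le_rfl
    have h2 := hk.2.2
    omega
  set Z := ∑ m ∈ Finset.Icc (k 0) S, β m with hZdef
  have key : ∀ i ∈ Finset.Icc 1 N,
      (∑ j ∈ Finset.Icc (k (i-1) + 1) (k i), (i:ℝ) * Pfun S k β j)
        = ∑ j ∈ Finset.Ioc (k (i-1) - 1) (k i - 1), (lam/mu) * β j / Z := by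
    intro i hi
    obtain ⟨hi1, hiN⟩ := Finset.mem_Icc.mp hi
    have e1 : Finset.Icc (k (i-1) + 1) (k i) = Finset.Ioc (k (i-1)) (k i) := by
      rw [Icc_eq_Ioc']; congr 1; ring
    rw [e1]
    have e2 : ∀ j ∈ Finset.Ioc (k (i-1)) (k i),
        (i:ℝ) * Pfun S k β j = (lam/mu) * β (j-1) / Z := by
      intro j hj
      obtain ⟨hj1, hj2⟩ := Finset.mem_Ioc.mp hj
      unfold Pfun
      rw [← hZdef, ← beta_rec hlam hmu hk hβ i hi1 hiN j hj1 hj2]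
      ring
    rw [Finset.sum_congr rfl e2]
    exact (reindex (k (i-1)) (k i) (fun j => (lam/mu) * β j / Z)).symm
  unfold Fval
  rw [Finset.sum_congr rfl key]
  have hb := sum_blocks N (fun n => k n - 1)
    (fun i h1 h2 => by have := hmono i h1 h2; omega)
    (fun j => (lam/mu) * β j / Z)
  rw [hb, hk.2.2]
  have hsplit : Z = (∑ j ∈ Finset.Ioc (k 0 - 1) (S-1), β j) + β S := by
    rw [hZdef, Icc_eq_Ioc', sum_Ioc_split β (b := S-1) (by omega) (by omega), Ioc_singleton,
      Finset.sum_singleton]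
  rw [← Finset.sum_div, ← Finset.mul_sum,
    show (∑ j ∈ Finset.Ioc (k 0 - 1) (S-1), β j) = Z - β S by linarith]

private lemma Xcoef_pert {k k' : ℕ → ℤ} {J : ℕ} (hJ1 : 1 ≤ J)
    (hk'J : k' J = k J - 1) (hk'ne : ∀ i : ℕ, i ≠ J → k' i = k i) (i : ℕ) :
    Xcoef k' i = Xcoef k i * (if J ∈ Finset.Icc 1 (i-1) then (J:ℝ) else 1)
      * (if J+1 ∈ Finset.Icc 1 (i-1) then 1/(((J+1:ℕ)):ℝ) else 1) := by
  unfold Xcoef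
  rw [← Finset.prod_ite_eq' (Finset.Icc 1 (i-1)) J (fun _ => (J:ℝ)),
      ← Finset.prod_ite_eq' (Finset.Icc 1 (i-1)) (J+1) (fun _ => 1/(((J+1:ℕ)):ℝ)),
      ← Finset.prod_mul_distrib, ← Finset.prod_mul_distrib]
  apply Finset.prod_congr rfl
  intro g hg
  have hg1 : 1 ≤ g := (Finset.mem_Icc.mp hg).1
  by_cases h1 : g = J
  · have hgJ : k' (J-1) = k (J-1) := hk'ne _ (by omega)
    rw [if_pos h1, if_neg (by omega), h1, hk'J, hgJ, mul_one]
    have hJ0 : ((J:ℝ)) ≠ 0 := by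
      have : (0:ℝ) < (J:ℝ) := by exact_mod_cast hJ1
      exact ne_of_gt this
    rw [show k J - 1 - k (J-1) = (k J - k (J-1)) - 1 by ring,
        zpow_sub_one₀ (one_div_ne_zero hJ0)]
    rw [one_div, inv_inv]
  · by_cases h2 : g = J+1
    · subst h2
      rw [if_neg h1, if_pos rfl, mul_one]
      have e1 : k' (J+1) = k (J+1) := hk'ne _ h1
      have e2 : k' (J+1-1) = k J - 1 := by rw [show J+1-1 = J from rfl, hk'J]
      have hJp : (((J+1:ℕ)):ℝ) ≠ 0 := by positivity
      rw [e1, e2, show k (J+1) - (k J - 1) = (k (J+1) - k J) + 1 by ring,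
          zpow_add_one₀ (one_div_ne_zero hJp)]
      rw [show J+1-1 = J from rfl]
    · rw [if_neg h1, if_neg h2, mul_one, mul_one, hk'ne g h1, hk'ne (g-1) (by omega)]

private lemma Xcoef_pert0 {k k' : ℕ → ℤ} (hk'0 : k' 0 = k 0 - 1)
    (hk'ne : ∀ i : ℕ, i ≠ 0 → k' i = k i) (i : ℕ) : Xcoef k' i = Xcoef k i := by
  unfold Xcoef
  apply Finset.prod_congr rfl
  intro g hg
  have hg1 : 1 ≤ g := (Finset.mem_Icc.mp hg).1
  by_cases h1 : g = 1
  · subst h1; simp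
  · rw [hk'ne g (by omega), hk'ne (g-1) (by omega)]

/-- Decreasing a single switching point by one can only increase the
expected number of workers in the front room. -/
theorem f_single_decrease
    (lam mu : ℝ) (hlam : 0 < lam) (hmu : 0 < mu)
    (N : ℕ) (hN : 1 ≤ N) (S : ℤ) (hS : (N : ℤ) ≤ S)
    (k k' : ℕ → ℤ) (hk : IsPolicy N S k)
    (J : ℕ) (hJ : J < N)
    (hgap1 : 1 ≤ J → 2 ≤ k J - k (J - 1))
    (hgap0 : J = 0 → 1 ≤ k 0)
    (hk'J : k' J = k J - 1)
    (hk'ne : ∀ i : ℕ, i ≠ J → k' i = k i)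
    (β β' : ℤ → ℝ)
    (hβ : IsBeta lam mu N k β) (hβ' : IsBeta lam mu N k' β') :
    Fval N S k β ≤ Fval N S k' β' := by
  have hr : (0:ℝ) < lam/mu := by positivity
  have hmono : ∀ i : ℕ, 1 ≤ i → i ≤ N → k (i-1) ≤ k i := fun i h1 h2 => by
    have := hk.2.1 i h1 h2; omega
  have hkmono := mono_gen k N hmono
  have hkNS : k N = S := hk.2.2
  have hk0S : k 0 ≤ S := by have h := hkmono 0 N (Nat.zero_le N) le_rfl; omega
  have hbpos := beta_pos hlam hmu hk hβ
  have hβS : 0 < β S := hbpos S hk0S le_rfl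
  rcases Nat.eq_zero_or_pos J with hJ0 | hJ1
  · -- case J = 0
    subst hJ0
    have hk'0 : k' 0 = k 0 - 1 := hk'J
    have hk01 : 1 ≤ k 0 := hgap0 rfl
    have hk' : IsPolicy N S k' := by
      refine ⟨by omega, ?_, by rw [hk'ne N (by omega)]; exact hkNS⟩
      intro i h1 h2
      by_cases hi1 : i = 1
      · subst hi1
        rw [hk'ne 1 one_ne_zero, show (1:ℕ)-1 = 0 from rfl, hk'0]
        have := hk.2.1 1 le_rfl h2
        simp only [show (1:ℕ)-1 = 0 from rfl] at this
        omega
      · rw [hk'ne i (by omega), hk'ne (i-1) (by omega)]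
        exact hk.2.1 i h1 h2
    have hX := Xcoef_pert0 hk'0 hk'ne
    have hrel : ∀ j : ℤ, k 0 ≤ j → j ≤ S → β' j = (lam/mu) * β j := by
      intro j h1 h2
      obtain ⟨i, hi1, hiN, hlo, hhi⟩ := cover N k' (j := j)
        (by rw [hk'0]; omega) (by rw [hk'.2.2]; exact h2)
      have hhi' : j ≤ k i := by rw [← hk'ne i (by omega)]; exact hhi
      have hlo' : k (i-1) ≤ j := by
        rcases eq_or_ne i 1 with rfl | hne
        · simpa using h1
        · have h3 : k' (i-1) = k (i-1) := hk'ne _ (by omega)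
          omega
      rw [beta_formula hk' hβ' i hi1 hiN j hlo.le hhi,
          beta_formula hk hβ i hi1 hiN j hlo' hhi', hX i]
      rcases eq_or_ne i 1 with rfl | hne
      · rw [hk'0, show j - (k 0 - 1) = (j - k 0) + 1 by ring, zpow_add_one₀ (ne_of_gt hr)]
        norm_num
        ring
      · rw [hk'0, hk'ne (i-1) (by omega),
            show j - (k 0 - 1) = (j - k 0) + 1 by ring, zpow_add_one₀ (ne_of_gt hr)]
        ring
    have hZpos : 0 < ∑ m ∈ Finset.Icc (k 0) S, β m :=
      Finset.sum_pos
        (fun m hm => hbpos m (Finset.mem_Icc.mp hm).1 (Finset.mem_Icc.mp hm).2)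
        ⟨k 0, Finset.mem_Icc.mpr ⟨le_rfl, hk0S⟩⟩
    have hZ' : (∑ m ∈ Finset.Icc (k' 0) S, β' m)
        = 1 + (lam/mu) * ∑ m ∈ Finset.Icc (k 0) S, β m := by
      rw [hk'0, Icc_eq_Ioc', sum_Ioc_split β' (b := k 0 - 1) (by omega) (by omega),
          Ioc_singleton, Finset.sum_singleton]
      have h1 : β' (k 0 - 1) = 1 := by rw [← hk'0]; exact hβ'.1
      have h2 : (∑ j ∈ Finset.Ioc (k 0 - 1) S, β' j)
          = (lam/mu) * ∑ m ∈ Finset.Icc (k 0) S, β m := by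
        rw [Finset.mul_sum, Icc_eq_Ioc']
        apply Finset.sum_congr rfl
        intro j hj
        obtain ⟨hj1, hj2⟩ := Finset.mem_Ioc.mp hj
        exact hrel j (by omega) hj2
      rw [h1, h2]
    have hβ'S : β' S = (lam/mu) * β S := hrel S hk0S le_rfl
    rw [Fval_eq hlam hmu hk hβ, Fval_eq hlam hmu hk' hβ', hZ', hβ'S]
    rw [div_le_div_iff₀ hZpos (by nlinarith)]
    nlinarith [mul_pos hr hβS, mul_pos (mul_pos hr hr) (mul_pos hβS hZpos)]
  · -- case J ≥ 1
    have hJN : J ≤ N := le_of_lt hJ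
    have hk'0 : k' 0 = k 0 := hk'ne 0 (by omega)
    have hgap := hgap1 hJ1
    have hk0kJ : k 0 < k J := by
      have h1 := hkmono 0 (J-1) (by omega) (by omega)
      omega
    have hkJS : k J ≤ S := by have := hkmono J N hJN le_rfl; omega
    have hk' : IsPolicy N S k' := by
      refine ⟨by rw [hk'0]; exact hk.1, ?_, by rw [hk'ne N (by omega)]; exact hkNS⟩
      intro i h1 h2
      by_cases hiJ : i = J
      · rw [hiJ, hk'J, hk'ne (J-1) (by omega)]
        omega
      · by_cases hiJ1 : i = J+1
        · subst hiJ1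
          rw [hk'ne (J+1) (by omega), show J+1-1 = J from rfl, hk'J]
          have := hk.2.1 (J+1) (by omega) h2
          simp only [Nat.add_sub_cancel] at this
          omega
        · rw [hk'ne i hiJ, hk'ne (i-1) (by omega)]
          exact hk.2.1 i h1 h2
    have hmono' : ∀ i : ℕ, 1 ≤ i → i ≤ N → k' (i-1) ≤ k' i := fun i a b => by
      have := hk'.2.1 i a b; omega
    have hJR : (0:ℝ) < (J:ℝ) := by exact_mod_cast hJ1
    have hX := Xcoef_pert hJ1 hk'J hk'ne
    have hlow : ∀ j : ℤ, k 0 ≤ j → j < k J → β' j = β j := by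
      intro j h1 h2
      rcases lt_or_eq_of_le h1 with h | h
      · obtain ⟨i, hi1, hiN, hlo, hhi⟩ := cover N k h (by omega)
        have hiJ : i ≤ J := by
          by_contra hc
          have h3 : k J ≤ k (i-1) := hkmono J (i-1) (by omega) (by omega)
          omega
        have b1 : k' (i-1) = k (i-1) := hk'ne _ (by omega)
        have b2 : j ≤ k' i := by
          rcases eq_or_ne i J with rfl | hne
          · rw [hk'J]; omega
          · rw [hk'ne i hne]; exact hhi
        rw [beta_formula hk hβ i hi1 hiN j hlo.le hhi,
            beta_formula hk' hβ' i hi1 hiN j (by rw [b1]; exact hlo.le) b2,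
            hX i, hk'0, b1,
            if_neg (by simp only [Finset.mem_Icc]; omega),
            if_neg (by simp only [Finset.mem_Icc]; omega)]
        ring
      · have e1 : β' (k 0) = 1 := by rw [← hk'0]; exact hβ'.1
        rw [← h, e1, hβ.1]
    have hhigh : ∀ j : ℤ, k J ≤ j → j ≤ S → β' j = ((J:ℝ)/((J:ℝ)+1)) * β j := by
      intro j h1 h2
      obtain ⟨i, hi1, hiN, hlo, hhi⟩ := cover N k' (j := j)
        (by rw [hk'0]; omega) (by rw [hk'.2.2]; exact h2)
      have hiJ : J+1 ≤ i := by
        by_contra hc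
        have h3 : k' i ≤ k' J := mono_gen k' N hmono' i J (by omega) hJN
        rw [hk'J] at h3
        omega
      have b2 : k' i = k i := hk'ne i (by omega)
      rcases eq_or_ne i (J+1) with rfl | hne
      · rw [beta_formula hk hβ (J+1) (by omega) hiN j
            (by simp only [Nat.add_sub_cancel]; exact h1) (by rw [← b2]; exact hhi),
            beta_formula hk' hβ' (J+1) (by omega) hiN j hlo.le hhi,
            hX (J+1)]
        simp only [Nat.add_sub_cancel]
        rw [hk'0, hk'J,
            if_pos (by simp only [Finset.mem_Icc]; omega),
            if_neg (by simp only [Finset.mem_Icc]; omega),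
            show j - (k J - 1) = (j - k J) + 1 by ring,
            zpow_add_one₀ (one_div_ne_zero (by positivity : (((J+1:ℕ)):ℝ) ≠ 0))]
        push_cast
        ring
      · have b1 : k' (i-1) = k (i-1) := hk'ne _ (by omega)
        rw [beta_formula hk hβ i hi1 hiN j (by rw [← b1]; exact hlo.le)
              (by rw [← b2]; exact hhi),
            beta_formula hk' hβ' i hi1 hiN j hlo.le hhi, hX i, hk'0, b1,
            if_pos (by simp only [Finset.mem_Icc]; omega),
            if_pos (by simp only [Finset.mem_Icc]; omega)]
        push_cast
        ring
    have hZk : (∑ m ∈ Finset.Icc (k 0) S, β m)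
        = (∑ j ∈ Finset.Ioc (k 0 - 1) (k J - 1), β j)
          + ∑ j ∈ Finset.Ioc (k J - 1) S, β j := by
      rw [Icc_eq_Ioc', sum_Ioc_split β (b := k J - 1) (by omega) (by omega)]
    have hZ' : (∑ m ∈ Finset.Icc (k' 0) S, β' m)
        = (∑ j ∈ Finset.Ioc (k 0 - 1) (k J - 1), β j)
          + ((J:ℝ)/((J:ℝ)+1)) * ∑ j ∈ Finset.Ioc (k J - 1) S, β j := by
      rw [hk'0, Icc_eq_Ioc', sum_Ioc_split β' (b := k J - 1) (by omega) (by omega)]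
      congr 1
      · apply Finset.sum_congr rfl
        intro j hj
        obtain ⟨hj1, hj2⟩ := Finset.mem_Ioc.mp hj
        exact hlow j (by omega) (by omega)
      · rw [Finset.mul_sum]
        apply Finset.sum_congr rfl
        intro j hj
        obtain ⟨hj1, hj2⟩ := Finset.mem_Ioc.mp hj
        exact hhigh j (by omega) hj2
    have hβ'S : β' S = ((J:ℝ)/((J:ℝ)+1)) * β S := hhigh S (by omega) le_rfl
    have ha : 0 ≤ ∑ j ∈ Finset.Ioc (k 0 - 1) (k J - 1), β j :=
      Finset.sum_nonneg fun j hj => by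
        obtain ⟨hj1, hj2⟩ := Finset.mem_Ioc.mp hj
        exact (hbpos j (by omega) (by omega)).le
    have hb : 0 < ∑ j ∈ Finset.Ioc (k J - 1) S, β j :=
      Finset.sum_pos
        (fun j hj => by
          obtain ⟨hj1, hj2⟩ := Finset.mem_Ioc.mp hj
          exact hbpos j (by omega) hj2)
        ⟨S, Finset.mem_Ioc.mpr ⟨by omega, le_rfl⟩⟩
    have ht0 : (0:ℝ) < (J:ℝ)/((J:ℝ)+1) := by positivity
    have ht1 : (J:ℝ)/((J:ℝ)+1) ≤ 1 := by
      rw [div_le_one (by positivity)]; linarith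
    rw [Fval_eq hlam hmu hk hβ, Fval_eq hlam hmu hk' hβ', hZ', hβ'S, hZk]
    have hbS : β S ≤ ∑ j ∈ Finset.Ioc (k J - 1) S, β j := by
      rw [sum_Ioc_split β (b := S - 1) (by omega) (by omega), Ioc_singleton,
          Finset.sum_singleton]
      have : 0 ≤ ∑ j ∈ Finset.Ioc (k J - 1) (S-1), β j :=
        Finset.sum_nonneg fun j hj => by
          obtain ⟨hj1, hj2⟩ := Finset.mem_Ioc.mp hj
          exact (hbpos j (by omega) (by omega)).le
      linarith
    rw [div_le_div_iff₀ (by linarith) (by nlinarith [mul_pos ht0 hb])]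
    nlinarith [mul_nonneg (mul_nonneg (mul_nonneg hr.le hβS.le) ha)
      (by linarith : (0:ℝ) ≤ 1 - (J:ℝ)/((J:ℝ)+1))]
end

section
/- Let K = (k_0, …, k_N) and K' = (k'_0, …, k'_N) be switching policies such that k'_i ≤ k_i for every 0 ≤ i ≤ N. Then W_q(K') ≤ W_q(K), F(K') ≥ F(K), and B(K') ≤ B(K); that is, the expected waiting time and the expected number of back-room workers are componentwise nondecreasing, and the expected number of front-room workers componentwise nonincreasing, functions of the switching points. -/
open Finset

/-!
In a state `j ∈ (k (i - 1), k i]` the weights satisfy `β j = (λ/μ) / i * β (j - 1)`, where `i`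
is the number of front-room workers. Lowering the switching points can only raise `i` in every
state, so `β' / β` (with `β` extended by zero below `k 0`) is nonincreasing: `β'` lies below `β`
in the likelihood-ratio order. For that order a symmetrized Chebyshev sum inequality gives
`E'[f] / P'(j < S) ≤ E[f] / P(j < S)` for every nondecreasing `f ≥ 0`. Summing the recursion
over the phases gives `F = (λ/μ) (1 - P S)`, while `W_q + 1/μ = E[j] / (λ (1 - P S))`; so
`f = 1` compares `F` (hence `B = N - F`) and `f = j` compares `W_q`.
-/

/-- `w' / w` is nonincreasing on `s`, stated without division. -/
def LikelihoodRatioLE {ι : Type*} [Preorder ι] (s : Set ι) (w' w : ι → ℝ) : Prop :=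
  ∀ j ∈ s, ∀ m ∈ s, j ≤ m → w' m * w j ≤ w' j * w m

namespace LikelihoodRatioLE

theorem of_ratio_le {a b : ℤ} {w' w r' r : ℤ → ℝ}
    (hw' : ∀ j, a < j → j ≤ b → w' j = r' j * w' (j - 1))
    (hw : ∀ j, a < j → j ≤ b → w j = r j * w (j - 1))
    (hr : ∀ j, a < j → j ≤ b → r' j ≤ r j) (hr'₀ : ∀ j, a < j → j ≤ b → 0 ≤ r' j)
    (hw'₀ : ∀ j, a ≤ j → j ≤ b → 0 ≤ w' j) (hw₀ : ∀ j, a ≤ j → j ≤ b → 0 ≤ w j) :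
    LikelihoodRatioLE (Set.Icc a b) w' w := by
  rintro j ⟨ha, -⟩ m ⟨-, hb⟩ hjm
  induction m, hjm using Int.leInduction with
  | base => rw [mul_comm]
  | succ m hjm ih =>
    have hm : a < m + 1 := by omega
    rw [hw' _ hm hb, hw _ hm hb, add_sub_cancel_right]
    calc r' (m + 1) * w' m * w j = r' (m + 1) * (w' m * w j) := by ring
      _ ≤ r' (m + 1) * (w' j * w m) := mul_le_mul_of_nonneg_left (ih (by omega)) (hr'₀ _ hm hb)
      _ ≤ r (m + 1) * (w' j * w m) := mul_le_mul_of_nonneg_right (hr _ hm hb)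
          (mul_nonneg (hw'₀ j ha (by omega)) (hw₀ m (by omega) (by omega)))
      _ = w' j * (r (m + 1) * w m) := by ring

theorem indicator {a' a b : ℤ} {w' w : ℤ → ℝ} (h : LikelihoodRatioLE (Set.Icc a b) w' w)
    (hw'₀ : ∀ j, a' ≤ j → j ≤ b → 0 ≤ w' j) (hw₀ : ∀ j, a ≤ j → j ≤ b → 0 ≤ w j) :
    LikelihoodRatioLE (Set.Icc a' b) w' ((Set.Icc a b).indicator w) := by
  rintro j ⟨hj, hjb⟩ m ⟨hm, hmb⟩ hjm
  by_cases hja : a ≤ j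
  · have hjs : j ∈ Set.Icc a b := ⟨hja, hjb⟩
    have hms : m ∈ Set.Icc a b := ⟨hja.trans hjm, hmb⟩
    rw [Set.indicator_of_mem hjs, Set.indicator_of_mem hms]
    exact h j hjs m hms hjm
  · rw [Set.indicator_of_notMem (by simp [hja]), mul_zero]
    refine mul_nonneg (hw'₀ j hj hjb) (Set.indicator_nonneg (fun i hi => hw₀ i hi.1 hi.2) m)

theorem sum_mul_sum_le {ι : Type*} [LinearOrder ι] {s : Finset ι}
    {w' w f g : ι → ℝ} (hlr : LikelihoodRatioLE s w' w)
    (hf : MonotoneOn f s) (hg : AntitoneOn g s)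
    (hf₀ : ∀ j ∈ s, 0 ≤ f j) (hg₀ : ∀ j ∈ s, 0 ≤ g j) :
    (∑ j ∈ s, f j * w' j) * ∑ j ∈ s, g j * w j ≤
      (∑ j ∈ s, f j * w j) * ∑ j ∈ s, g j * w' j := by
  have hterm : ∀ j ∈ s, ∀ m ∈ s,
      0 ≤ (f m * g j - f j * g m) * (w' j * w m - w' m * w j) := by
    intro j hj m hm
    rcases le_total j m with h | h
    · have := hlr j (mem_coe.2 hj) m (mem_coe.2 hm) h
      refine mul_nonneg ?_ (by linarith)
      nlinarith [hf hj hm h, hg hj hm h, hf₀ j hj, hg₀ j hj]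
    · have := hlr m (mem_coe.2 hm) j (mem_coe.2 hj) h
      refine mul_nonneg_of_nonpos_of_nonpos ?_ (by linarith)
      nlinarith [hf hm hj h, hg hm hj h, hf₀ m hm, hg₀ m hm]
  set D : ι → ι → ℝ := fun j m => f j * w j * (g m * w' m) - f j * w' j * (g m * w m) with hD
  have hdiff : (∑ j ∈ s, f j * w j) * (∑ j ∈ s, g j * w' j) -
      (∑ j ∈ s, f j * w' j) * ∑ j ∈ s, g j * w j = ∑ j ∈ s, ∑ m ∈ s, D j m := by
    simp only [hD, sum_mul_sum, ← sum_sub_distrib]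
  have hsymm : ∑ j ∈ s, ∑ m ∈ s, (f m * g j - f j * g m) * (w' j * w m - w' m * w j) =
      ∑ j ∈ s, ∑ m ∈ s, D j m + ∑ j ∈ s, ∑ m ∈ s, D m j := by
    rw [← sum_add_distrib]
    refine sum_congr rfl fun j _ => ?_
    rw [← sum_add_distrib]
    exact sum_congr rfl fun m _ => by ring
  rw [sum_comm (f := fun j m => D m j)] at hsymm
  linarith [sum_nonneg fun j hj => sum_nonneg fun m hm => hterm j hj m hm]

end LikelihoodRatioLE

theorem sum_Icc_sum_Ioc_eq_sum_Ioc {α M : Type*} [LinearOrder α] [LocallyFiniteOrder α]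
    [AddCommMonoid M] {n : ℕ} {k : ℕ → α} (hk : MonotoneOn k (Set.Iic n)) (f : α → M) :
    ∑ i ∈ Icc 1 n, ∑ j ∈ Ioc (k (i - 1)) (k i), f j = ∑ j ∈ Ioc (k 0) (k n), f j := by
  induction n with
  | zero => simp
  | succ n ih =>
    rw [sum_Icc_succ_top (by omega), ih (hk.mono (Set.Iic_subset_Iic.2 n.le_succ)),
      Nat.add_sub_cancel, ← sum_union (Ioc_disjoint_Ioc_of_le le_rfl),
      Ioc_union_Ioc_eq_Ioc (hk (by simp) (by simp) (by omega)) (hk (by simp) (by simp) (by omega))]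

theorem sum_Ioc_comp_sub_one {M : Type*} [AddCommMonoid M] (a b : ℤ) (f : ℤ → M) :
    ∑ j ∈ Ioc a b, f (j - 1) = ∑ j ∈ Ico a b, f j := by
  rw [← Ico_add_one_add_one_eq_Ioc, ← sum_Ico_add']
  simp

theorem sum_Icc_mul_indicator {a' a b : ℤ} (h : a' ≤ a) (f w : ℤ → ℝ) :
    ∑ j ∈ Icc a' b, f j * (Set.Icc a b).indicator w j = ∑ j ∈ Icc a b, f j * w j := by
  simp_rw [← Set.indicator_mul_right, ← coe_Icc]
  exact sum_indicator_subset _ (Icc_subset_Icc_left h)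

theorem sum_Icc_ite_lt_mul {a b : ℤ} (h : a ≤ b) (w : ℤ → ℝ) :
    ∑ j ∈ Icc a b, (if j < b then 1 else 0) * w j = ∑ j ∈ Ico a b, w j := by
  rw [← Ico_insert_right h, sum_insert right_notMem_Ico, if_neg (lt_irrefl b), zero_mul, zero_add]
  exact sum_congr rfl fun j hj => by rw [if_pos (mem_Ico.1 hj).2, one_mul]

namespace IsPolicy

variable {N : ℕ} {S : ℤ} {k : ℕ → ℤ}

theorem strictMonoOn (hk : IsPolicy N S k) : StrictMonoOn k (Set.Iic N) :=
  strictMonoOn_Iic_of_lt_succ fun m hm => by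
    have := hk.2.1 (m + 1) (by omega) (Order.succ_le_of_lt hm)
    simp only [Order.succ_eq_add_one, Nat.add_sub_cancel] at this ⊢
    omega

theorem monotoneOn (hk : IsPolicy N S k) : MonotoneOn k (Set.Iic N) :=
  hk.strictMonoOn.monotoneOn

theorem zero_le (hk : IsPolicy N S k) : k 0 ≤ S :=
  hk.2.2 ▸ hk.monotoneOn (by simp) (by simp) N.zero_le

theorem zero_lt (hk : IsPolicy N S k) (hN : 1 ≤ N) : k 0 < S :=
  hk.2.2 ▸ hk.strictMonoOn (by simp) (by simp) (by omega)

theorem exists_mem_Ioc (hk : IsPolicy N S k) {j : ℤ} (h₀ : k 0 < j) (hS : j ≤ S) :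
    ∃ i, 1 ≤ i ∧ i ≤ N ∧ k (i - 1) < j ∧ j ≤ k i := by
  classical
  have hex : ∃ i, j ≤ k i := ⟨N, hk.2.2 ▸ hS⟩
  have hpos : Nat.find hex ≠ 0 := fun h => by have := Nat.find_spec hex; rw [h] at this; omega
  exact ⟨Nat.find hex, by omega, Nat.find_le (hk.2.2 ▸ hS),
    not_le.1 (Nat.find_min hex (by omega)), Nat.find_spec hex⟩

end IsPolicy

/-- The index `i` with `j ∈ (k (i - 1), k i]` (see `IsPolicy.frontWorkers_eq`), counted in a
form that is visibly antitone in `k`. -/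
def frontWorkers (N : ℕ) (k : ℕ → ℤ) (j : ℤ) : ℕ := #{g ∈ range N | k g < j}

theorem IsPolicy.frontWorkers_eq {N : ℕ} {S : ℤ} {k : ℕ → ℤ} (hk : IsPolicy N S k) {i : ℕ}
    (hiN : i ≤ N) {j : ℤ} (hj : k (i - 1) < j) (hj' : j ≤ k i) :
    frontWorkers N k j = i := by
  suffices {g ∈ range N | k g < j} = range i by rw [frontWorkers, this, card_range]
  ext g
  simp only [mem_filter, mem_range]
  constructor
  · rintro ⟨hg, hgj⟩
    by_contra! h
    have := hk.monotoneOn (by simpa using hiN) (by simpa using hg.le) h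
    omega
  · intro hg
    have := hk.monotoneOn (by simp; omega) (by simp; omega) (Nat.le_sub_one_of_lt hg)
    omega

theorem frontWorkers_le_frontWorkers {N : ℕ} {k k' : ℕ → ℤ} (hle : ∀ i, i ≤ N → k' i ≤ k i)
    (j : ℤ) : frontWorkers N k j ≤ frontWorkers N k' j :=
  card_le_card fun g hg => by
    simp only [mem_filter, mem_range] at hg ⊢
    exact ⟨hg.1, (hle g hg.1.le).trans_lt hg.2⟩

theorem Wq_eq {lam mu : ℝ} {S : ℤ} {k : ℕ → ℤ} {β : ℤ → ℝ} (hS : k 0 ≤ S)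
    (hT : ∑ j ∈ Icc (k 0) S, β j ≠ 0) :
    Wq lam mu S k β =
      (∑ j ∈ Icc (k 0) S, (j : ℝ) * β j) / (lam * ∑ j ∈ Ico (k 0) S, β j) - 1 / mu := by
  have hP : 1 - Pfun S k β S = (∑ j ∈ Ico (k 0) S, β j) / ∑ j ∈ Icc (k 0) S, β j := by
    rw [Pfun, eq_div_iff hT, sub_mul, div_mul_cancel₀ _ hT, ← Ico_insert_right hS,
      sum_insert right_notMem_Ico]
    ring
  rw [Wq, Lval, hP]
  simp_rw [Pfun, mul_div_assoc']
  rw [← sum_div, div_div_div_cancel_right₀ hT]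

namespace IsBeta

variable {lam mu : ℝ} {N : ℕ} {S : ℤ} {k k' : ℕ → ℤ} {β β' : ℤ → ℝ}

theorem eq_at_switch (hk : IsPolicy N S k) (hβ : IsBeta lam mu N k β) {i : ℕ} (hi : 1 ≤ i)
    (hiN : i ≤ N) : β (k (i - 1)) = (lam / mu) ^ (k (i - 1) - k 0) * Xcoef k i := by
  obtain ⟨p, rfl | rfl⟩ : ∃ p, i = 1 ∨ i = p + 2 := ⟨i - 2, by omega⟩
  · simp [Xcoef, hβ.1]
  · have hstep := hk.2.1 (p + 1) (by omega) (by omega)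
    simp only [Nat.add_sub_cancel] at hstep
    rw [show p + 2 - 1 = p + 1 from rfl, hβ.2 (p + 1) (by omega) (by omega) _ (by simp; omega)
      le_rfl, Xcoef, Xcoef, show p + 2 - 1 = p + 1 from rfl, prod_Icc_succ_top (by omega),
      Nat.add_sub_cancel]
    push_cast
    ring

theorem eq_mul_zpow (hk : IsPolicy N S k) (hβ : IsBeta lam mu N k β) (hρ : lam / mu ≠ 0)
    {i : ℕ} (hi : 1 ≤ i) (hiN : i ≤ N) {j : ℤ} (hj : k (i - 1) ≤ j) (hj' : j ≤ k i) :
    β j = (lam / mu / i) ^ (j - k (i - 1)) * β (k (i - 1)) := by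
  rcases hj.eq_or_lt with rfl | hj
  · simp
  rw [hβ.2 i hi hiN j (by omega) hj', hβ.eq_at_switch hk hi hiN, div_eq_mul_one_div (lam / mu),
    mul_zpow, ← sub_add_sub_cancel j (k (i - 1)) (k 0), zpow_add₀ hρ]
  ring

theorem eq_mul_pred (hk : IsPolicy N S k) (hβ : IsBeta lam mu N k β) (hρ : lam / mu ≠ 0)
    {i : ℕ} (hi : 1 ≤ i) (hiN : i ≤ N) {j : ℤ} (hj : k (i - 1) < j) (hj' : j ≤ k i) :
    β j = lam / mu / i * β (j - 1) := by
  have hi₀ : lam / mu / i ≠ 0 := div_ne_zero hρ (by positivity)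
  rw [hβ.eq_mul_zpow hk hρ hi hiN hj.le hj',
    hβ.eq_mul_zpow hk hρ hi hiN (j := j - 1) (by omega) (by omega),
    show j - k (i - 1) = j - 1 - k (i - 1) + 1 by ring, zpow_add_one₀ hi₀]
  ring

theorem pos (hk : IsPolicy N S k) (hβ : IsBeta lam mu N k β) (hρ : 0 < lam / mu) {j : ℤ}
    (hj : k 0 ≤ j) (hjS : j ≤ S) : 0 < β j := by
  induction j, hj using Int.leInduction with
  | base => simp [hβ.1]
  | succ j hj ih =>
    obtain ⟨i, hi, hiN, h, h'⟩ := hk.exists_mem_Ioc (j := j + 1) (by omega) hjS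
    rw [hβ.eq_mul_pred hk hρ.ne' hi hiN h h', add_sub_cancel_right]
    have : (0 : ℝ) < i := by exact_mod_cast hi
    have := ih (by omega)
    positivity

theorem eq_frontWorkers_mul_pred (hk : IsPolicy N S k) (hβ : IsBeta lam mu N k β)
    (hρ : lam / mu ≠ 0) {j : ℤ} (hj : k 0 < j) (hjS : j ≤ S) :
    β j = lam / mu / frontWorkers N k j * β (j - 1) := by
  obtain ⟨i, hi, hiN, h, h'⟩ := hk.exists_mem_Ioc hj hjS
  rw [hk.frontWorkers_eq hiN h h', hβ.eq_mul_pred hk hρ hi hiN h h']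

theorem sum_pos (hk : IsPolicy N S k) (hβ : IsBeta lam mu N k β) (hρ : 0 < lam / mu)
    {s : Finset ℤ} (hs : s ⊆ Icc (k 0) S) (hne : s.Nonempty) : 0 < ∑ j ∈ s, β j :=
  Finset.sum_pos (fun _ hj => hβ.pos hk hρ (mem_Icc.1 (hs hj)).1 (mem_Icc.1 (hs hj)).2) hne

theorem likelihoodRatioLE (hk : IsPolicy N S k) (hk' : IsPolicy N S k')
    (hle : ∀ i, i ≤ N → k' i ≤ k i) (hβ : IsBeta lam mu N k β) (hβ' : IsBeta lam mu N k' β')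
    (hρ : 0 < lam / mu) :
    LikelihoodRatioLE (Set.Icc (k' 0) S) β' ((Set.Icc (k 0) S).indicator β) := by
  have hk₀ : k' 0 ≤ k 0 := hle 0 N.zero_le
  refine LikelihoodRatioLE.indicator ?_ (fun j hj hjS => (hβ'.pos hk' hρ hj hjS).le)
    (fun j hj hjS => (hβ.pos hk hρ hj hjS).le)
  refine LikelihoodRatioLE.of_ratio_le (r' := fun j => lam / mu / frontWorkers N k' j)
    (r := fun j => lam / mu / frontWorkers N k j)
    (fun j hj hjS => hβ'.eq_frontWorkers_mul_pred hk' hρ.ne' (by omega) hjS)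
    (fun j hj hjS => hβ.eq_frontWorkers_mul_pred hk hρ.ne' hj hjS)
    (fun j hj hjS => ?_) (fun _ _ _ => by positivity)
    (fun j hj hjS => (hβ'.pos hk' hρ (by omega) hjS).le)
    (fun j hj hjS => (hβ.pos hk hρ hj hjS).le)
  obtain ⟨i, hi, hiN, h, h'⟩ := hk.exists_mem_Ioc hj hjS
  have hpos : (0 : ℝ) < frontWorkers N k j := by
    rw [hk.frontWorkers_eq hiN h h']; exact_mod_cast hi
  exact div_le_div_of_nonneg_left hρ.le hpos
    (by exact_mod_cast frontWorkers_le_frontWorkers hle j)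

theorem Fval_eq (hk : IsPolicy N S k) (hβ : IsBeta lam mu N k β) (hρ : lam / mu ≠ 0) :
    Fval N S k β = lam / mu * (∑ j ∈ Ico (k 0) S, β j) / ∑ j ∈ Icc (k 0) S, β j := by
  have hterm : ∀ i ∈ Icc 1 N, ∀ j ∈ Ioc (k (i - 1)) (k i),
      (i : ℝ) * Pfun S k β j = lam / mu * β (j - 1) / ∑ j ∈ Icc (k 0) S, β j := by
    intro i hi j hj
    obtain ⟨hi, hiN⟩ := mem_Icc.1 hi
    have : (i : ℝ) ≠ 0 := by positivity
    rw [Pfun, hβ.eq_mul_pred hk hρ hi hiN (mem_Ioc.1 hj).1 (mem_Ioc.1 hj).2]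
    field_simp
  simp_rw [Fval, Icc_add_one_left_eq_Ioc]
  rw [sum_congr rfl fun i hi => sum_congr rfl (hterm i hi),
    sum_Icc_sum_Ioc_eq_sum_Ioc hk.monotoneOn, hk.2.2,
    sum_Ioc_comp_sub_one (f := fun j => lam / mu * β j / ∑ j ∈ Icc (k 0) S, β j),
    ← sum_div, ← mul_sum]

theorem sum_mul_sum_Ico_le (hk : IsPolicy N S k) (hk' : IsPolicy N S k')
    (hle : ∀ i, i ≤ N → k' i ≤ k i) (hβ : IsBeta lam mu N k β) (hβ' : IsBeta lam mu N k' β')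
    (hρ : 0 < lam / mu) {f : ℤ → ℝ} (hf : MonotoneOn f (Set.Icc (k' 0) S))
    (hf₀ : ∀ j, k' 0 ≤ j → 0 ≤ f j) :
    (∑ j ∈ Icc (k' 0) S, f j * β' j) * ∑ j ∈ Ico (k 0) S, β j ≤
      (∑ j ∈ Icc (k 0) S, f j * β j) * ∑ j ∈ Ico (k' 0) S, β' j := by
  have hk₀ : k' 0 ≤ k 0 := hle 0 N.zero_le
  have hlr := hβ.likelihoodRatioLE hk hk' hle hβ' hρ
  rw [← coe_Icc] at hlr hf
  have := hlr.sum_mul_sum_le hf (g := fun j => if j < S then 1 else 0)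
    (fun j _ m _ h => by beta_reduce; split_ifs <;> first | omega | norm_num)
    (fun j hj => hf₀ j (mem_Icc.1 hj).1) (fun j _ => by split_ifs <;> norm_num)
  rwa [sum_Icc_mul_indicator hk₀, sum_Icc_mul_indicator hk₀, sum_Icc_ite_lt_mul hk.zero_le,
    sum_Icc_ite_lt_mul hk'.zero_le] at this

end IsBeta

theorem componentwise_monotone_general
    (lam mu : ℝ) (hlam : 0 < lam) (hmu : 0 < mu)
    (N : ℕ) (hN : 1 ≤ N) (S : ℤ)
    (k k' : ℕ → ℤ) (hk : IsPolicy N S k) (hk' : IsPolicy N S k')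
    (hle : ∀ i : ℕ, i ≤ N → k' i ≤ k i)
    (β β' : ℤ → ℝ)
    (hβ : IsBeta lam mu N k β) (hβ' : IsBeta lam mu N k' β') :
    Wq lam mu S k' β' ≤ Wq lam mu S k β ∧
    Fval N S k β ≤ Fval N S k' β' ∧
    Bval N S k' β' ≤ Bval N S k β := by
  have hρ : 0 < lam / mu := div_pos hlam hmu
  have hkS : k 0 < S := hk.zero_lt hN
  have hk'S : k' 0 < S := hk'.zero_lt hN
  have hT := hβ.sum_pos hk hρ Subset.rfl (nonempty_Icc.2 hkS.le)
  have hT' := hβ'.sum_pos hk' hρ Subset.rfl (nonempty_Icc.2 hk'S.le)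
  have hU := hβ.sum_pos hk hρ Ico_subset_Icc_self (nonempty_Ico.2 hkS)
  have hU' := hβ'.sum_pos hk' hρ Ico_subset_Icc_self (nonempty_Ico.2 hk'S)
  have hF : Fval N S k β ≤ Fval N S k' β' := by
    have := hβ.sum_mul_sum_Ico_le hk hk' hle hβ' hρ (f := 1) monotoneOn_const
      (fun _ _ => zero_le_one)
    simp only [Pi.one_apply, one_mul] at this
    rw [hβ.Fval_eq hk hρ.ne', hβ'.Fval_eq hk' hρ.ne', mul_div_assoc, mul_div_assoc]
    exact mul_le_mul_of_nonneg_left ((div_le_div_iff₀ hT hT').2 (by linarith)) hρ.le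
  refine ⟨?_, hF, sub_le_sub_left hF _⟩
  have := hβ.sum_mul_sum_Ico_le hk hk' hle hβ' hρ (f := fun j => (j : ℝ))
    (fun _ _ _ _ h => Int.cast_le.2 h) (fun _ hj => Int.cast_nonneg (hk'.1.trans hj))
  rw [Wq_eq hk'S.le hT'.ne', Wq_eq hkS.le hT.ne']
  refine sub_le_sub_right ((div_le_div_iff₀ (mul_pos hlam hU') (mul_pos hlam hU)).2 ?_) _
  linarith [mul_le_mul_of_nonneg_left this hlam.le]

/-- Componentwise monotonicity: if `k' i ≤ k i` for all `i`, then
`W_q(K') ≤ W_q(K)`, `F(K') ≥ F(K)` and `B(K') ≤ B(K)`. -/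
theorem componentwise_monotone
    (lam mu : ℝ) (hlam : 0 < lam) (hmu : 0 < mu)
    (N : ℕ) (hN : 1 ≤ N) (S : ℤ) (hS : (N : ℤ) ≤ S)
    (k k' : ℕ → ℤ) (hk : IsPolicy N S k) (hk' : IsPolicy N S k')
    (hle : ∀ i : ℕ, i ≤ N → k' i ≤ k i)
    (β β' : ℤ → ℝ)
    (hβ : IsBeta lam mu N k β) (hβ' : IsBeta lam mu N k' β') :
    Wq lam mu S k' β' ≤ Wq lam mu S k β ∧
    Fval N S k β ≤ Fval N S k' β' ∧
    Bval N S k' β' ≤ Bval N S k β :=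
  componentwise_monotone_general lam mu hlam hmu N hN S k k' hk hk' hle β β' hβ hβ'
end
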